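/- arXiv:2404.19439 — 4 statements merged into one kernel-verified Lean document; each statement's English description precedes it below -/
import Mathlib

section
/- For the Lie algebra 𝔤 = ⟨∂_x, x∂_x, x²∂_x⟩ ≅ sl(2,ℂ) acting on ℂ, every Chevalley–Eilenberg 1-cocycle λ with values in holomorphic functions O(ℂ) that satisfies λ(∂_x) = 0 is given by λ(x∂_x) = A/2 and λ(x²∂_x) = A·x for some constant A ∈ ℂ. Consequently H¹(sl(2,ℂ), O(ℂ)) ≅ ℂ. -/
/-- For `sl(2,ℂ) = ⟨∂_x, x∂_x, x²∂_x⟩` acting on `ℂ`, every holomorphic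
1-cocycle `λ` normalized by `λ(∂_x) = 0` satisfies `λ(x∂_x) = A/2` and
`λ(x²∂_x) = A·x` for some constant `A ∈ ℂ`. Here `b = λ(x∂_x)`,
`c = λ(x²∂_x)` and the hypotheses are the cocycle conditions for the brackets
`[X,Y] = X`, `[X,Z] = 2Y`, `[Y,Z] = Z` with `λ(X) = 0`. -/
theorem stmt_6 (b c : ℂ → ℂ)
    (hb : Differentiable ℂ b) (hc : Differentiable ℂ c)
    (hXY : ∀ z : ℂ, deriv b z = 0)
    (hXZ : ∀ z : ℂ, deriv c z = 2 * b z)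
    (hYZ : ∀ z : ℂ, z * deriv c z - z ^ 2 * deriv b z = c z) :
    ∃ A : ℂ, (∀ z : ℂ, b z = A / 2) ∧ (∀ z : ℂ, c z = A * z) := by
  have hconst : ∀ z : ℂ, b z = b 0 :=
    fun z => is_const_of_deriv_eq_zero hb hXY z 0
  refine ⟨2 * b 0, fun z => by rw [hconst z]; ring, fun z => ?_⟩
  have h := hYZ z
  rw [hXZ z, hXY z, hconst z] at h
  linear_combination -h
end

section
/- Consider sl(2,ℂ) on ℂP¹ with normalized local weights λ₀ = (0, A/2, A·x) on the chart U₀ and λ_∞ = (B·y, B/2, 0) on the chart U_∞ (in the basis X, Y, Z). A nonvanishing holomorphic transition function g on U₀ ∩ U_∞ satisfying X(g)/g = λ₀(X) − λ_∞(X) for all X ∈ sl(2,ℂ) exists if and only if A = −B and A ∈ ℤ, in which case g = C·x^A. -/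
/-- Compatibility of a transition function `g` on `U₀ ∩ U_∞ ≅ ℂ∖{0}` with the
normalized weights `λ₀ = (0, A/2, A·x)` and `λ_∞ = (B·y, B/2, 0)` of
`sl(2,ℂ)` on `ℂP¹`, expressed in the coordinate `x` (where `y = 1/x`):
`X(g)/g = λ₀(X) − λ_∞(X)` for each basis field `X = ∂_x, x∂_x, x²∂_x`. -/
def SL2Compatible (A B : ℂ) (g : ℂ → ℂ) : Prop :=
  DifferentiableOn ℂ g {(0 : ℂ)}ᶜ ∧ (∀ z : ℂ, z ≠ 0 → g z ≠ 0) ∧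
  (∀ z : ℂ, z ≠ 0 → deriv g z = (0 - B / z) * g z) ∧
  (∀ z : ℂ, z ≠ 0 → z * deriv g z = (A / 2 - B / 2) * g z) ∧
  (∀ z : ℂ, z ≠ 0 → z ^ 2 * deriv g z = (A * z - 0) * g z)

lemma sl2_A_eq_negB {A B : ℂ} {g : ℂ → ℂ} (h : SL2Compatible A B g) : A = -B := by
  obtain ⟨_, hne, h3, h4, _⟩ := h
  have h1 := h3 1 one_ne_zero
  have h2 := h4 1 one_ne_zero
  rw [one_mul, h1] at h2
  have hg := hne 1 one_ne_zero
  have : (0 - B / 1) = (A / 2 - B / 2) := mul_right_cancel₀ hg h2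
  field_simp at this
  linear_combination -this

lemma sl2_classify {A B : ℂ} {g : ℂ → ℂ} (h : SL2Compatible A B g) :
    ∃ C : ℂ, C ≠ 0 ∧ ∃ n : ℤ, A = (n : ℂ) ∧ ∀ z : ℂ, z ≠ 0 → g z = C * z ^ n := by
  have hAB := sl2_A_eq_negB h
  obtain ⟨hdiff, hne, h3, _, _⟩ := h
  have hd : ∀ z : ℂ, z ≠ 0 → deriv g z = A / z * g z := by
    intro z hz; rw [h3 z hz, hAB]; ring
  have hopen : IsOpen ({(0:ℂ)}ᶜ) := isOpen_compl_singleton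
  have hdAt : ∀ z : ℂ, z ≠ 0 → DifferentiableAt ℂ g z := fun z hz =>
    (hdiff.differentiableAt (hopen.mem_nhds hz))
  set k : ℂ → ℂ := fun t => g (Complex.exp t) * Complex.exp (-A * t) with hk
  have hkd : ∀ t : ℂ, HasDerivAt k 0 t := by
    intro t
    have he : Complex.exp t ≠ 0 := Complex.exp_ne_zero t
    have h1 : HasDerivAt (fun t => g (Complex.exp t)) (deriv g (Complex.exp t) * Complex.exp t) t :=
      ((hdAt _ he).hasDerivAt).comp t (Complex.hasDerivAt_exp t)
    have h2 : HasDerivAt (fun t => Complex.exp (-A * t)) (-A * Complex.exp (-A * t)) t := by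
      simpa [mul_comm] using ((hasDerivAt_id t).const_mul (-A)).cexp
    have := h1.mul h2
    refine this.congr_deriv ?_
    rw [hd _ he]
    field_simp
    ring
  have hconst : ∀ t : ℂ, k t = k 0 := fun t =>
    is_const_of_deriv_eq_zero (fun t => (hkd t).differentiableAt)
      (fun t => (hkd t).deriv) t 0
  have hgexp : ∀ t : ℂ, g (Complex.exp t) = g 1 * Complex.exp (A * t) := by
    intro t
    have h0 := hconst t
    simp only [hk] at h0
    rw [Complex.exp_zero, mul_zero, Complex.exp_zero, mul_one] at h0
    calc g (Complex.exp t)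
        = g (Complex.exp t) * Complex.exp (-A * t) * Complex.exp (A * t) := by
          rw [mul_assoc, ← Complex.exp_add, neg_mul, neg_add_cancel, Complex.exp_zero, mul_one]
      _ = g 1 * Complex.exp (A * t) := by rw [h0]
  have hg1 : g 1 ≠ 0 := hne 1 one_ne_zero
  have hper : Complex.exp (A * (2 * Real.pi * Complex.I)) = 1 := by
    have h1 := hgexp (2 * Real.pi * Complex.I)
    rw [Complex.exp_two_pi_mul_I] at h1
    have h2 : g 1 * 1 = g 1 * Complex.exp (A * (2 * Real.pi * Complex.I)) := by
      rw [mul_one]; exact h1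
    exact (mul_left_cancel₀ hg1 h2).symm
  obtain ⟨n, hn⟩ := Complex.exp_eq_one_iff.mp hper
  have h2pi : (2 * Real.pi * Complex.I : ℂ) ≠ 0 := by
    simp [Real.pi_ne_zero, Complex.I_ne_zero]
  have hA : A = (n : ℂ) := mul_right_cancel₀ h2pi hn
  refine ⟨g 1, hg1, n, hA, ?_⟩
  intro z hz
  have := hgexp (Complex.log z)
  rw [Complex.exp_log hz] at this
  rw [this, hA, Complex.exp_int_mul, Complex.exp_log hz]

/-- A nonvanishing holomorphic transition function on `U₀ ∩ U_∞` compatible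
with the weights `λ₀`, `λ_∞` exists iff `A = −B` and `A ∈ ℤ`, in which case
`g = C·x^A`. -/
theorem stmt_7 (A B : ℂ) :
    ((∃ g : ℂ → ℂ, SL2Compatible A B g) ↔ (A = -B ∧ ∃ n : ℤ, A = (n : ℂ))) ∧
      (∀ g : ℂ → ℂ, SL2Compatible A B g →
        ∃ C : ℂ, C ≠ 0 ∧ ∃ n : ℤ, A = (n : ℂ) ∧ ∀ z : ℂ, z ≠ 0 → g z = C * z ^ n) := by
  refine ⟨⟨?_, ?_⟩, fun g hg => sl2_classify hg⟩
  · rintro ⟨g, hg⟩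
    obtain ⟨C, _, n, hA, _⟩ := sl2_classify hg
    exact ⟨sl2_A_eq_negB hg, n, hA⟩
  · rintro ⟨hAB, n, hA⟩
    refine ⟨fun z => z ^ n, fun z hz =>
        (differentiableAt_zpow.mpr (Or.inl hz)).differentiableWithinAt,
      fun z hz => zpow_ne_zero n hz, ?_, ?_, ?_⟩ <;>
    · intro z hz
      have hdz : deriv (fun z : ℂ => z ^ n) z = (n : ℂ) * z ^ (n - 1) :=
        (hasDerivAt_zpow n z (Or.inl hz)).deriv
      have hB : B = -(n : ℂ) := by rw [← hA, hAB]; ring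
      simp only [hdz, hB, hA, zpow_sub_one₀ hz]
      field_simp
      try ring
end

section
/- Let 𝔞 = ⟨∂_x, x∂_x⟩ (the affine algebra) act on ℂP¹. The general normalized weights are λ₀ = (0, A) on U₀ and λ_∞ = (B₂·y, B₁) on U_∞ (with coordinates x and y = 1/x). A compatible holomorphic transition function exists if and only if A = B₁ − B₂ and B₂ ∈ ℤ, and it is then cohomologous to g = x^(−B₂). -/
/-- Compatibility of a transition function `g` on `U₀ ∩ U_∞ ≅ ℂ∖{0}` with the
normalized weights `λ₀ = (0, A)` and `λ_∞ = (B₂·y, B₁)` of `aff(1,ℂ)` on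
`ℂP¹`, expressed in the coordinate `x` (where `y = 1/x`):
`X(g)/g = λ₀(X) − λ_∞(X)` for the basis fields `X = ∂_x` and `Y = x∂_x`. -/
def AffCompatible (A B₁ B₂ : ℂ) (g : ℂ → ℂ) : Prop :=
  DifferentiableOn ℂ g {(0 : ℂ)}ᶜ ∧ (∀ z : ℂ, z ≠ 0 → g z ≠ 0) ∧
  (∀ z : ℂ, z ≠ 0 → deriv g z = (0 - B₂ / z) * g z) ∧
  (∀ z : ℂ, z ≠ 0 → z * deriv g z = (A - B₁) * g z)

open Complex in
lemma aff_main {A B₁ B₂ : ℂ} {g : ℂ → ℂ} (h : AffCompatible A B₁ B₂ g) :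
    ∃ C : ℂ, C ≠ 0 ∧ ∃ n : ℤ, B₂ = (n : ℂ) ∧ ∀ z : ℂ, z ≠ 0 → g z = C * z ^ (-n) := by
  obtain ⟨hdiff, hne, hode, _⟩ := h
  set F : ℂ → ℂ := fun t => g (Complex.exp t) * Complex.exp (B₂ * t) with hF
  have hgd : ∀ t : ℂ, DifferentiableAt ℂ g (Complex.exp t) := fun t =>
    hdiff.differentiableAt (isOpen_compl_singleton.mem_nhds (Complex.exp_ne_zero t))
  have hFd : ∀ t : ℂ, HasDerivAt F 0 t := by
    intro t
    have h1 : HasDerivAt (fun t => g (Complex.exp t))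
        (deriv g (Complex.exp t) * Complex.exp t) t :=
      ((hgd t).hasDerivAt).comp t (Complex.hasDerivAt_exp t)
    have h2 : HasDerivAt (fun t : ℂ => Complex.exp (B₂ * t))
        (Complex.exp (B₂ * t) * B₂) t := by
      simpa using ((hasDerivAt_id t).const_mul B₂).cexp
    have := h1.mul h2
    have hd : deriv g (Complex.exp t) = (0 - B₂ / Complex.exp t) * g (Complex.exp t) :=
      hode _ (Complex.exp_ne_zero t)
    have hz : deriv g (Complex.exp t) * Complex.exp t * Complex.exp (B₂ * t) +
        g (Complex.exp t) * (Complex.exp (B₂ * t) * B₂) = 0 := by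
      rw [hd]; field_simp
      ring
    rwa [hz] at this
  have hconst : ∀ t : ℂ, F t = F 0 :=
    fun t => is_const_of_deriv_eq_zero (fun s => (hFd s).differentiableAt)
      (fun s => (hFd s).deriv) t 0
  have hF0 : F 0 = g 1 := by simp [hF]
  set C := g 1 with hC
  have hCne : C ≠ 0 := hne 1 one_ne_zero
  -- monodromy : B₂ is an integer
  have hmono : Complex.exp (B₂ * (2 * Real.pi * Complex.I)) = 1 := by
    have := hconst (2 * Real.pi * Complex.I)
    rw [hF0] at this
    simp only [hF, Complex.exp_two_pi_mul_I] at this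
    field_simp at this
    rw [show B₂ * (2 * ↑Real.pi * Complex.I) = B₂ * 2 * ↑Real.pi * Complex.I by ring]
    exact mul_left_cancel₀ hCne (this.trans (mul_one C).symm)
  obtain ⟨m, hm⟩ := Complex.exp_eq_one_iff.mp hmono
  have hpi : (2 * Real.pi * Complex.I : ℂ) ≠ 0 := by
    simp [Real.pi_ne_zero, Complex.I_ne_zero]
  have hB₂ : B₂ = (m : ℂ) := by
    exact mul_right_cancel₀ hpi hm
  refine ⟨C, hCne, m, hB₂, fun z hz => ?_⟩
  have := hconst (Complex.log z)
  rw [hF0] at this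
  simp only [hF] at this
  rw [Complex.exp_log hz] at this
  have hz' : g z = C * Complex.exp (-(B₂ * Complex.log z)) := by
    rw [← this, Complex.exp_neg, mul_assoc, mul_inv_cancel₀ (Complex.exp_ne_zero _), mul_one]
  rw [hz', hB₂]
  congr 1
  rw [show -((m : ℂ) * Complex.log z) = ((-m : ℤ) : ℂ) * Complex.log z by push_cast; ring,
    Complex.exp_int_mul, Complex.exp_log hz]

/-- For `aff(1,ℂ)` on `ℂP¹`, a compatible holomorphic transition function
exists iff `A = B₁ − B₂` and `B₂ ∈ ℤ`, in which case it is cohomologous to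
`g = x^(−B₂)`, i.e. every such `g` equals `C·x^(−B₂)`. -/
theorem stmt_8 (A B₁ B₂ : ℂ) :
    ((∃ g : ℂ → ℂ, AffCompatible A B₁ B₂ g) ↔ (A = B₁ - B₂ ∧ ∃ n : ℤ, B₂ = (n : ℂ))) ∧
      (∀ g : ℂ → ℂ, AffCompatible A B₁ B₂ g →
        ∃ C : ℂ, C ≠ 0 ∧ ∃ n : ℤ, B₂ = (n : ℂ) ∧ ∀ z : ℂ, z ≠ 0 → g z = C * z ^ (-n)) := by
  constructor
  · constructor
    · rintro ⟨g, hg⟩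
      obtain ⟨hdiff, hne, hode, hode2⟩ := hg
      have h1 := hode 1 one_ne_zero
      have h2 := hode2 1 one_ne_zero
      have hg1 := hne 1 one_ne_zero
      rw [one_mul, h1] at h2
      simp only [div_one] at h2
      have hA : A = B₁ - B₂ := by
        have := mul_right_cancel₀ hg1 h2
        linear_combination -this
      refine ⟨hA, ?_⟩
      obtain ⟨C, hC, n, hn, _⟩ := aff_main ⟨hdiff, hne, hode, hode2⟩
      exact ⟨n, hn⟩
    · rintro ⟨hA, n, hn⟩
      refine ⟨fun z => z ^ (-n), ?_, ?_, ?_, ?_⟩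
      · intro z hz
        exact (differentiableAt_zpow.mpr (Or.inl hz)).differentiableWithinAt
      · intro z hz; exact zpow_ne_zero _ hz
      · intro z hz
        rw [deriv_zpow, hn]
        simp only
        rw [zpow_sub₀ hz]
        push_cast
        field_simp
        ring_nf
      · intro z hz
        rw [deriv_zpow, hA, hn]
        simp only
        rw [zpow_sub₀ hz]
        push_cast
        field_simp
        ring
  · intro g hg
    exact aff_main hg
end

section
/- If the projection of local lifts admits absolute invariants u_α/f_α as above, then the dimension of generic 𝔤^λ-orbits on U_α × ℂ equals the dimension of generic 𝔤-orbits on U_α; that is, the lift 𝔤^λ determined by a 𝔤-invariant divisor is transversal. -/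
/-- If a family of vector fields `X i` leaves the divisor `{f = 0}` invariant
with weights `lam i` (so that `u/f` is an absolute invariant of the lifted
fields `(X i, lam i · u)` on the trivial line bundle), then at every point
`x` with `f x ≠ 0` and any fiber value `u`, the dimension of the span of the
lifted field values equals the dimension of the span of the base field
values: the lift determined by an invariant divisor is transversal. -/
theorem stmt_12 {E ι : Type*} [NormedAddCommGroup E] [NormedSpace ℂ E]
    (f : E → ℂ) (X : ι → E → E) (lam : ι → E → ℂ)
    (h : ∀ (i : ι) (x : E), fderiv ℂ f x (X i x) = lam i x * f x)
    (x : E) (hfx : f x ≠ 0) (u : ℂ) :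
    Module.rank ℂ
        (Submodule.span ℂ (Set.range fun i : ι => ((X i x, lam i x * u) : E × ℂ)))
      = Module.rank ℂ (Submodule.span ℂ (Set.range fun i : ι => X i x)) := by
  set T : E →ₗ[ℂ] E × ℂ :=
    LinearMap.prod LinearMap.id ((u / f x) • (fderiv ℂ f x : E →ₗ[ℂ] ℂ)) with hT
  have hinj : Function.Injective T := by
    intro a b hab
    exact congrArg Prod.fst hab
  have hkey : (Set.range fun i : ι => ((X i x, lam i x * u) : E × ℂ))
      = T '' Set.range (fun i : ι => X i x) := by
    rw [← Set.range_comp]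
    apply congrArg Set.range
    funext i
    simp only [Function.comp, hT, LinearMap.prod_apply, Function.prod, LinearMap.id_apply,
      LinearMap.smul_apply, ContinuousLinearMap.coe_coe, smul_eq_mul, h i x]
    rw [Prod.mk.injEq]
    constructor
    · rfl
    · field_simp
  rw [hkey, ← Submodule.map_span]
  exact ((Submodule.span ℂ (Set.range fun i : ι => X i x)).equivMapOfInjective T hinj).symm.rank_eq
end
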